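/- arXiv:2308.13639 — 2 statements merged into one kernel-verified Lean document; each statement's English description precedes it below -/
import Mathlib

section
/- Let G be a cubic graph with df(G) = 3 and let M be an optimal 3-array whose core contains no triply covered edge. Then the core of M is a single 6-cycle, and moreover this 6-cycle is an induced (chordless) cycle of G. -/
/-!
Without triply covered edges, the three perfect matchings meet each vertex either in three
distinct edges or in one doubly covered, one simply covered and one uncovered edge. So the
uncovered and the doubly covered edges are two matchings with the same vertex set, and the core
is a union of cycles alternating between them. With three uncovered edges it is a hexagon or a
square plus one more uncovered edge, and in the latter case the doubly covered partner of that
edge has nowhere to go.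

If some matching contained all three doubly covered edges, trading them for the three uncovered
edges would give a 3-array covering every edge, against df(G) = 3. Hence the three doubly
covered edges are covered by three different pairs of matchings. A chord `uw` of the hexagon
would be simply covered, by `M j` say; then the doubly covered edges at `u` and at `w` both
avoid `j`, so they are covered by the same pair, hence equal, which makes `uw` doubly covered.
-/

open SimpleGraph

variable {V : Type} [Fintype V] [DecidableEq V]

/-- A cubic graph: every vertex has exactly three neighbours. -/
def IsCubic (G : SimpleGraph V) : Prop := ∀ v : V, (G.neighborSet v).ncard = 3

/-- A proper 3-edge-colouring: adjacent (distinct, vertex-sharing) edges get distinct colours. -/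
def ProperEdgeColoring (G : SimpleGraph V) (c : Sym2 V → Fin 3) : Prop :=
  ∀ e₁ ∈ G.edgeSet, ∀ e₂ ∈ G.edgeSet, e₁ ≠ e₂ → (∃ v : V, v ∈ e₁ ∧ v ∈ e₂) → c e₁ ≠ c e₂

def ThreeEdgeColorable (G : SimpleGraph V) : Prop :=
  ∃ c : Sym2 V → Fin 3, ProperEdgeColoring G c

/-- 2-connectedness: at least 3 vertices, connected, and deleting any vertex leaves it connected. -/
def TwoConnected (G : SimpleGraph V) : Prop :=
  3 ≤ Fintype.card V ∧ G.Connected ∧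
    ∀ v : V, ((⊤ : G.Subgraph).deleteVerts {v}).coe.Connected

/-- A snark: a 2-connected cubic graph with no proper 3-edge-colouring. -/
def IsSnark (G : SimpleGraph V) : Prop :=
  IsCubic G ∧ TwoConnected G ∧ ¬ ThreeEdgeColorable G

/-- The set of edges left uncovered by a 3-array of perfect matchings. -/
def uncovered (G : SimpleGraph V) (M : Fin 3 → G.Subgraph) : Set (Sym2 V) :=
  {e | e ∈ G.edgeSet ∧ ∀ i, e ∉ (M i).edgeSet}

/-- The colouring defect: minimum number of uncovered edges over all 3-arrays. -/
noncomputable def defect (G : SimpleGraph V) : ℕ :=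
  sInf {n : ℕ | ∃ M : Fin 3 → G.Subgraph,
    (∀ i, (M i).IsPerfectMatching) ∧ n = (uncovered G M).ncard}

/-- The number of matchings of the 3-array containing a given edge. -/
noncomputable def coverCount (G : SimpleGraph V) (M : Fin 3 → G.Subgraph)
    (e : Sym2 V) : ℕ :=
  {i : Fin 3 | e ∈ (M i).edgeSet}.ncard

/-- The edge set of the core: edges of `G` not simply covered. -/
def coreEdges (G : SimpleGraph V) (M : Fin 3 → G.Subgraph) : Set (Sym2 V) :=
  {e | e ∈ G.edgeSet ∧ coverCount G M e ≠ 1}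

/-- The core of a 3-array, as a graph on `V`. -/
def coreGraph (G : SimpleGraph V) (M : Fin 3 → G.Subgraph) : SimpleGraph V where
  Adj u w := G.Adj u w ∧ coverCount G M s(u, w) ≠ 1
  symm := by
    constructor
    intro u w h
    refine ⟨h.1.symm, ?_⟩
    rw [Sym2.eq_swap]
    exact h.2
  loopless := by
    constructor
    intro v h
    exact G.loopless.irrefl v h.1


namespace Fin3

theorem inter_nonempty_of_ncard_eq_two {P Q : Set (Fin 3)} (hP : P.ncard = 2)
    (hQ : Q.ncard = 2) : (P ∩ Q).Nonempty := by
  have h := Set.ncard_inter_add_ncard_union P Q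
  have hle : (P ∪ Q).ncard ≤ 3 := by
    simpa using Set.ncard_le_ncard (Set.subset_univ (P ∪ Q))
  exact Set.nonempty_of_ncard_ne_zero (by omega)

theorem eq_of_ncard_eq_two_of_notMem {P Q : Set (Fin 3)} (hP : P.ncard = 2) (hQ : Q.ncard = 2)
    {j : Fin 3} (hjP : j ∉ P) (hjQ : j ∉ Q) : P = Q := by
  have hcompl : ∀ R : Set (Fin 3), R.ncard = 2 → j ∉ R → R = {j}ᶜ := fun R hR hjR =>
    Set.eq_of_subset_of_ncard_le (fun x hx => by rintro rfl; exact hjR hx)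
      (by rw [Set.ncard_compl]; simp [hR])
  rw [hcompl P hP hjP, hcompl Q hQ hjQ]

theorem pairwise_ne_of_forall_notMem {P Q R : Set (Fin 3)} (hP : P.ncard = 2)
    (hQ : Q.ncard = 2) (hR : R.ncard = 2) (h : ∀ a, a ∈ P → a ∈ Q → a ∉ R) :
    P ≠ Q ∧ P ≠ R ∧ Q ≠ R := by
  refine ⟨fun hPQ => ?_, fun hPR => ?_, fun hQR => ?_⟩
  · obtain ⟨a, haP, haR⟩ := inter_nonempty_of_ncard_eq_two hP hR
    exact h a haP (hPQ ▸ haP) haR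
  · obtain ⟨a, haP, haQ⟩ := inter_nonempty_of_ncard_eq_two hP hQ
    exact h a haP haQ (hPR ▸ haP)
  · obtain ⟨a, haP, haQ⟩ := inter_nonempty_of_ncard_eq_two hP hQ
    exact h a haP haQ (hQR ▸ haQ)

theorem exists_third {i j : Fin 3} (hij : i ≠ j) :
    ∃ k, k ≠ i ∧ k ≠ j ∧ ∀ l, l = i ∨ l = j ∨ l = k := by
  revert i j
  decide

end Fin3

theorem eq_insert_insert_singleton_of_ncard_eq_three {α : Type*} {s : Set α}
    (hs : s.ncard = 3) {x y z : α} (hx : x ∈ s) (hy : y ∈ s) (hz : z ∈ s) (hxy : x ≠ y)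
    (hxz : x ≠ z) (hyz : y ≠ z) : s = {x, y, z} :=
  (Set.eq_of_subset_of_ncard_le (Set.insert_subset hx (Set.pair_subset hy hz))
    (by rw [hs, Set.ncard_eq_three.mpr ⟨x, y, z, hxy, hxz, hyz, rfl⟩])
    (Set.finite_of_ncard_ne_zero (by omega))).symm

section

variable {V : Type} {G : SimpleGraph V} {M : Fin 3 → G.Subgraph}

def coverIndices (G : SimpleGraph V) (M : Fin 3 → G.Subgraph) (e : Sym2 V) : Set (Fin 3) :=
  {i | e ∈ (M i).edgeSet}

def doublyCovered (G : SimpleGraph V) (M : Fin 3 → G.Subgraph) : Set (Sym2 V) :=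
  {e | coverCount G M e = 2}

def uncoveredVerts (G : SimpleGraph V) (M : Fin 3 → G.Subgraph) : Set V :=
  {v | ∃ w, s(v, w) ∈ uncovered G M}

structure IsTripleFreeArray (G : SimpleGraph V) (M : Fin 3 → G.Subgraph) : Prop where
  cubic : IsCubic G
  perfect : ∀ i, (M i).IsPerfectMatching
  coverCount_ne_three : ∀ e ∈ G.edgeSet, coverCount G M e ≠ 3

theorem coverCount_eq_ncard (e : Sym2 V) : coverCount G M e = (coverIndices G M e).ncard := rfl

@[simp]
theorem mem_doublyCovered {e : Sym2 V} : e ∈ doublyCovered G M ↔ coverCount G M e = 2 :=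
  Iff.rfl

theorem coverCount_comm (v w : V) : coverCount G M s(v, w) = coverCount G M s(w, v) := by
  rw [Sym2.eq_swap]

theorem mem_uncovered_comm {v w : V} : s(v, w) ∈ uncovered G M ↔ s(w, v) ∈ uncovered G M := by
  rw [Sym2.eq_swap]

theorem coverCount_le_three (e : Sym2 V) : coverCount G M e ≤ 3 := by
  rw [coverCount_eq_ncard]
  simpa using Set.ncard_le_ncard (Set.subset_univ (coverIndices G M e))

theorem coverCount_eq_zero_iff {e : Sym2 V} :
    coverCount G M e = 0 ↔ ∀ i, e ∉ (M i).edgeSet := by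
  rw [coverCount_eq_ncard, Set.ncard_eq_zero]
  simp [coverIndices, Set.eq_empty_iff_forall_notMem]

theorem coverCount_eq_zero_of_mem_uncovered {e : Sym2 V} (h : e ∈ uncovered G M) :
    coverCount G M e = 0 :=
  coverCount_eq_zero_iff.mpr h.2

theorem mem_edgeSet_of_coverCount_ne_zero {e : Sym2 V} (h : coverCount G M e ≠ 0) :
    e ∈ G.edgeSet := by
  obtain ⟨i, hi⟩ := Set.nonempty_of_ncard_ne_zero h
  exact (M i).edgeSet_subset hi

theorem adj_of_coverCount_eq_two {v w : V} (h : coverCount G M s(v, w) = 2) : G.Adj v w :=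
  mem_edgeSet_of_coverCount_ne_zero (M := M) (e := s(v, w)) (by omega)

theorem coverCount_eq_two_of_mem_of_mem (hA : IsTripleFreeArray G M) {e : Sym2 V}
    {i j : Fin 3} (hij : i ≠ j) (hi : e ∈ (M i).edgeSet) (hj : e ∈ (M j).edgeSet) :
    coverCount G M e = 2 := by
  have h2 : 2 ≤ coverCount G M e := by
    rw [coverCount_eq_ncard, ← Set.ncard_pair hij]
    exact Set.ncard_le_ncard (Set.pair_subset hi hj)
  have := coverCount_le_three (M := M) e
  have := hA.coverCount_ne_three e ((M i).edgeSet_subset hi)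
  omega

theorem coreEdges_eq_union (hA : IsTripleFreeArray G M) :
    coreEdges G M = uncovered G M ∪ doublyCovered G M := by
  ext e
  constructor
  · rintro ⟨he, h1⟩
    have := coverCount_le_three (M := M) e
    have := hA.coverCount_ne_three e he
    obtain h0 | h2 : coverCount G M e = 0 ∨ coverCount G M e = 2 := by omega
    · exact Or.inl ⟨he, coverCount_eq_zero_iff.mp h0⟩
    · exact Or.inr h2
  · rintro (h | h)
    · exact ⟨h.1, by simp [coverCount_eq_zero_of_mem_uncovered h]⟩
    · rw [mem_doublyCovered] at h
      exact ⟨mem_edgeSet_of_coverCount_ne_zero (M := M) (by omega), by omega⟩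

theorem eq_of_coverCount_eq_two (hM : ∀ i, (M i).IsPerfectMatching) {v x y : V}
    (hx : coverCount G M s(v, x) = 2) (hy : coverCount G M s(v, y) = 2) : x = y := by
  obtain ⟨i, hix, hiy⟩ := Fin3.inter_nonempty_of_ncard_eq_two hx hy
  exact (hM i).1.eq_of_adj_left hix hiy

/- The three partners of `v` avoid `y`, so two of them coincide among the two other
neighbours. -/
theorem exists_coverCount_eq_two_of_mem_uncovered (hA : IsTripleFreeArray G M) {v y : V}
    (hy : s(v, y) ∈ uncovered G M) : ∃ x, coverCount G M s(v, x) = 2 := by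
  choose p hp using fun i => ((M i).isPerfectMatching_iff.mp (hA.perfect i) v).exists
  have hmaps : ∀ i ∈ (Set.univ : Set (Fin 3)), p i ∈ G.neighborSet v \ {y} := by
    intro i _
    refine ⟨(M i).adj_sub (hp i), ?_⟩
    rintro rfl
    exact hy.2 i (hp i)
  have hcard : (G.neighborSet v \ {y}).ncard = 2 := by
    rw [Set.ncard_sdiff_singleton_of_mem (show y ∈ G.neighborSet v from hy.1), hA.cubic v]
  obtain ⟨i, -, j, -, hij, hpij⟩ := Set.exists_ne_map_eq_of_ncard_lt_of_maps_to
    (by simp [hcard]) hmaps (Set.finite_of_ncard_ne_zero (by omega))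
  exact ⟨p i, coverCount_eq_two_of_mem_of_mem hA hij (hp i) (hpij ▸ hp j)⟩

/- Two matchings meet `v` in `vx` and the third in some `vw`; the uncovered edges at `v` go to
the neighbours other than `x` and `w`, and there is exactly one. -/
theorem existsUnique_mem_uncovered_of_coverCount_eq_two (hA : IsTripleFreeArray G M)
    {v x : V} (hx : coverCount G M s(v, x) = 2) : ∃! y, s(v, y) ∈ uncovered G M := by
  obtain ⟨i, j, hij, hidx⟩ := Set.ncard_eq_two.mp ((coverCount_eq_ncard _).symm.trans hx)
  have hix : (M i).Adj v x := (hidx ▸ Set.mem_insert i {j} : i ∈ coverIndices G M s(v, x))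
  have hjx : (M j).Adj v x :=
    (hidx ▸ Set.mem_insert_of_mem i rfl : j ∈ coverIndices G M s(v, x))
  obtain ⟨k, hki, hkj, hk⟩ := Fin3.exists_third hij
  obtain ⟨w, hw⟩ := ((M k).isPerfectMatching_iff.mp (hA.perfect k) v).exists
  have hwx : w ≠ x := by
    rintro rfl
    have : k ∈ coverIndices G M s(v, w) := hw
    rw [hidx] at this
    rcases this with rfl | rfl <;> contradiction
  have key : ∀ y, s(v, y) ∈ uncovered G M ↔ y ∈ G.neighborSet v \ {x, w} := by
    intro y
    simp only [uncovered, Set.mem_ofPred_eq, Set.mem_sdiff, mem_neighborSet, mem_edgeSet,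
      Subgraph.mem_edgeSet, Set.mem_insert_iff, Set.mem_singleton_iff, not_or]
    constructor
    · rintro ⟨hadj, hnone⟩
      refine ⟨hadj, ?_, ?_⟩ <;> rintro rfl
      exacts [hnone i hix, hnone k hw]
    · rintro ⟨hadj, hyx, hyw⟩
      refine ⟨hadj, fun l hl => ?_⟩
      rcases hk l with rfl | rfl | rfl
      exacts [hyx ((hA.perfect l).1.eq_of_adj_left hl hix),
        hyx ((hA.perfect l).1.eq_of_adj_left hl hjx),
        hyw ((hA.perfect l).1.eq_of_adj_left hl hw)]
  have hpair : ({x, w} : Set V) ⊆ G.neighborSet v :=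
    Set.pair_subset (adj_of_coverCount_eq_two hx) ((M k).adj_sub hw)
  obtain ⟨z, hz⟩ : ∃ z, G.neighborSet v \ {x, w} = {z} := by
    rw [← Set.ncard_eq_one, Set.ncard_sdiff hpair, hA.cubic v, Set.ncard_pair hwx.symm]
  simp only [hz, Set.mem_singleton_iff] at key
  exact ⟨z, (key z).2 rfl, fun y hy => (key y).1 hy⟩

theorem mem_uncoveredVerts_of_coverCount_eq_two (hA : IsTripleFreeArray G M) {v x : V}
    (hx : coverCount G M s(v, x) = 2) : v ∈ uncoveredVerts G M :=
  (existsUnique_mem_uncovered_of_coverCount_eq_two hA hx).exists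

theorem eq_of_mem_uncovered (hA : IsTripleFreeArray G M) {v x y : V}
    (hx : s(v, x) ∈ uncovered G M) (hy : s(v, y) ∈ uncovered G M) : x = y := by
  obtain ⟨z, hz⟩ := exists_coverCount_eq_two_of_mem_uncovered hA hx
  exact (existsUnique_mem_uncovered_of_coverCount_eq_two hA hz).unique hx hy

theorem eq_of_mem_of_mem_uncovered (hA : IsTripleFreeArray G M) {e f : Sym2 V} {v : V}
    (he : e ∈ uncovered G M) (hf : f ∈ uncovered G M) (hve : v ∈ e) (hvf : v ∈ f) :
    e = f := by
  obtain ⟨x, rfl⟩ := Sym2.mem_iff_exists.mp hve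
  obtain ⟨y, rfl⟩ := Sym2.mem_iff_exists.mp hvf
  rw [eq_of_mem_uncovered hA he hf]

theorem ne_of_mem_uncovered_of_ne (hA : IsTripleFreeArray G M) {x y z w : V}
    (h : s(x, y) ∈ uncovered G M) (h' : s(z, w) ∈ uncovered G M) (hne : s(x, y) ≠ s(z, w)) :
    x ≠ z ∧ x ≠ w ∧ y ≠ z ∧ y ≠ w := by
  have key : ∀ v, v ∈ s(x, y) → v ∉ s(z, w) := fun v hv hv' =>
    hne (eq_of_mem_of_mem_uncovered hA h h' hv hv')
  refine ⟨fun e => key x ?_ ?_, fun e => key x ?_ ?_, fun e => key y ?_ ?_,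
    fun e => key y ?_ ?_⟩ <;> simp [e]

/-- `M a` with its edges at the core replaced by the uncovered edges. -/
def exchange (G : SimpleGraph V) (M : Fin 3 → G.Subgraph) (a : Fin 3) : G.Subgraph where
  verts := Set.univ
  Adj x y := s(x, y) ∈ uncovered G M ∨
    ((M a).Adj x y ∧ x ∉ uncoveredVerts G M ∧ y ∉ uncoveredVerts G M)
  adj_sub := by
    rintro x y (h | ⟨h, -, -⟩)
    exacts [h.1, (M a).adj_sub h]
  edge_vert _ := Set.mem_univ _
  symm := ⟨fun x y => by
    rintro (h | ⟨h, hx, hy⟩)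
    exacts [Or.inl (by rwa [Sym2.eq_swap]), Or.inr ⟨h.symm, hy, hx⟩]⟩

variable {a : Fin 3}

theorem exchange_adj {x y : V} : (exchange G M a).Adj x y ↔ s(x, y) ∈ uncovered G M ∨
    ((M a).Adj x y ∧ x ∉ uncoveredVerts G M ∧ y ∉ uncoveredVerts G M) := Iff.rfl

theorem coverCount_eq_two_of_adj (hA : IsTripleFreeArray G M)
    (ha : doublyCovered G M ⊆ (M a).edgeSet) {v w : V} (hv : v ∈ uncoveredVerts G M)
    (hvw : (M a).Adj v w) : coverCount G M s(v, w) = 2 := by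
  obtain ⟨y, hy⟩ := hv
  obtain ⟨x, hx⟩ := exists_coverCount_eq_two_of_mem_uncovered hA hy
  rwa [(hA.perfect a).1.eq_of_adj_left hvw (ha hx)]

theorem mem_uncoveredVerts_of_adj (hA : IsTripleFreeArray G M)
    (ha : doublyCovered G M ⊆ (M a).edgeSet) {v w : V} (hv : v ∈ uncoveredVerts G M)
    (hvw : (M a).Adj v w) : w ∈ uncoveredVerts G M := by
  have h := coverCount_eq_two_of_adj hA ha hv hvw
  rw [coverCount_comm] at h
  exact mem_uncoveredVerts_of_coverCount_eq_two hA h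

theorem exchange_isPerfectMatching (hA : IsTripleFreeArray G M)
    (ha : doublyCovered G M ⊆ (M a).edgeSet) : (exchange G M a).IsPerfectMatching := by
  rw [Subgraph.isPerfectMatching_iff]
  intro v
  by_cases hv : v ∈ uncoveredVerts G M
  · obtain ⟨x, hx⟩ := hv
    refine ⟨x, exchange_adj.2 (Or.inl hx), fun y hxy => ?_⟩
    rcases exchange_adj.1 hxy with hy | ⟨-, hv', -⟩
    exacts [eq_of_mem_uncovered hA hy hx, absurd ⟨x, hx⟩ hv']
  · obtain ⟨w, hw, huniq⟩ := (M a).isPerfectMatching_iff.mp (hA.perfect a) v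
    have hw' : w ∉ uncoveredVerts G M := fun h =>
      hv (mem_uncoveredVerts_of_adj hA ha h hw.symm)
    refine ⟨w, exchange_adj.2 (Or.inr ⟨hw, hv, hw'⟩), fun y hvy => ?_⟩
    rcases exchange_adj.1 hvy with hy | ⟨hy, -, -⟩
    exacts [absurd ⟨y, hy⟩ hv, huniq y hy]

theorem uncovered_update_exchange (hA : IsTripleFreeArray G M)
    (ha : doublyCovered G M ⊆ (M a).edgeSet) :
    uncovered G (Function.update M a (exchange G M a)) = ∅ := by
  refine Set.eq_empty_of_forall_notMem ?_
  rintro ⟨x, y⟩ ⟨he, hnone⟩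
  have hN : ¬ (exchange G M a).Adj x y := by simpa using hnone a
  rw [exchange_adj, not_or] at hN
  have hM : ∀ i ≠ a, s(x, y) ∉ (M i).edgeSet := fun i hi => by
    simpa [Function.update_of_ne hi] using hnone i
  by_cases hxy : (M a).Adj x y
  · have h2 : coverCount G M s(x, y) = 2 := by
      by_cases hx : x ∈ uncoveredVerts G M
      · exact coverCount_eq_two_of_adj hA ha hx hxy
      by_cases hy : y ∈ uncoveredVerts G M
      · rw [coverCount_comm]
        exact coverCount_eq_two_of_adj hA ha hy hxy.symm
      exact absurd ⟨hxy, hx, hy⟩ hN.2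
    obtain ⟨i, hi, hia⟩ := Set.exists_ne_of_one_lt_ncard
      (show 1 < (coverIndices G M s(x, y)).ncard by rw [← coverCount_eq_ncard, h2]; omega) a
    exact hM i hia hi
  · refine hN.1 ⟨he, fun i => ?_⟩
    rcases eq_or_ne i a with rfl | hi
    exacts [hxy, hM i hi]

theorem defect_eq_zero_of_doublyCovered_subset (hA : IsTripleFreeArray G M)
    (ha : doublyCovered G M ⊆ (M a).edgeSet) : defect G = 0 := by
  have hperf : ∀ i, (Function.update M a (exchange G M a) i).IsPerfectMatching := by
    intro i
    rcases eq_or_ne i a with rfl | hi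
    · simpa using exchange_isPerfectMatching hA ha
    · simpa [Function.update_of_ne hi] using hA.perfect i
  refine Nat.eq_zero_of_le_zero (Nat.sInf_le ⟨_, hperf, ?_⟩)
  rw [uncovered_update_exchange hA ha, Set.ncard_empty]

theorem injOn_coverIndices (hA : IsTripleFreeArray G M) (hdf : defect G ≠ 0)
    {d₁ d₂ d₃ : Sym2 V} (hD : doublyCovered G M = {d₁, d₂, d₃}) :
    Set.InjOn (coverIndices G M) (doublyCovered G M) := by
  have h2 : ∀ d ∈ doublyCovered G M, (coverIndices G M d).ncard = 2 := fun _ hd => hd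
  obtain ⟨h₁₂, h₁₃, h₂₃⟩ := Fin3.pairwise_ne_of_forall_notMem
    (h2 d₁ (by simp [hD])) (h2 d₂ (by simp [hD])) (h2 d₃ (by simp [hD])) fun a h₁ h₂ h₃ => by
      refine hdf (defect_eq_zero_of_doublyCovered_subset hA (a := a) ?_)
      rw [hD]
      rintro e (rfl | rfl | rfl)
      exacts [h₁, h₂, h₃]
  intro e he f hf h
  rw [hD] at he hf
  rcases he with rfl | rfl | rfl <;> rcases hf with rfl | rfl | rfl <;>
    first | rfl | exact absurd h ‹_› | exact absurd h.symm ‹_›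

theorem coverCount_ne_one_of_mem_uncoveredVerts (hA : IsTripleFreeArray G M)
    (hinj : Set.InjOn (coverIndices G M) (doublyCovered G M)) {u w : V}
    (hu : u ∈ uncoveredVerts G M) (hw : w ∈ uncoveredVerts G M) (huw : u ≠ w) :
    coverCount G M s(u, w) ≠ 1 := by
  intro h1
  obtain ⟨j, hj⟩ := Set.ncard_eq_one.mp ((coverCount_eq_ncard _).symm.trans h1)
  have hjuw : (M j).Adj u w := (hj ▸ rfl : j ∈ coverIndices G M s(u, w))
  obtain ⟨u', hu'⟩ := exists_coverCount_eq_two_of_mem_uncovered hA hu.choose_spec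
  obtain ⟨w', hw'⟩ := exists_coverCount_eq_two_of_mem_uncovered hA hw.choose_spec
  have hju : j ∉ coverIndices G M s(u, u') := fun h => by
    rw [(hA.perfect j).1.eq_of_adj_left hjuw (show (M j).Adj u u' from h)] at h1
    omega
  have hjw : j ∉ coverIndices G M s(w, w') := fun h => by
    rw [coverCount_comm,
      (hA.perfect j).1.eq_of_adj_left hjuw.symm (show (M j).Adj w w' from h)] at h1
    omega
  have heq : s(u, u') = s(w, w') :=
    hinj hu' hw' (Fin3.eq_of_ncard_eq_two_of_notMem hu' hw' hju hjw)
  obtain ⟨h, -⟩ | ⟨-, rfl⟩ := Sym2.eq_iff.mp heq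
  · exact huw h
  · omega

theorem eq_or_of_mem_uncoveredVerts {a b c d e f v : V}
    (hU : uncovered G M = {s(a, b), s(c, d), s(e, f)}) (hv : v ∈ uncoveredVerts G M) :
    v = a ∨ v = b ∨ v = c ∨ v = d ∨ v = e ∨ v = f := by
  obtain ⟨x, hx⟩ := hv
  rw [hU] at hx
  simp only [Set.mem_insert_iff, Set.mem_singleton_iff, Sym2.eq_iff] at hx
  tauto

theorem nodup_of_uncovered_eq (hA : IsTripleFreeArray G M) {a b c d e f : V}
    (hU : uncovered G M = {s(a, b), s(c, d), s(e, f)}) (h₁₂ : s(a, b) ≠ s(c, d))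
    (h₁₃ : s(a, b) ≠ s(e, f)) (h₂₃ : s(c, d) ≠ s(e, f)) : [a, b, c, d, e, f].Nodup := by
  obtain ⟨h₁, h₂, h₃⟩ : s(a, b) ∈ uncovered G M ∧ s(c, d) ∈ uncovered G M ∧
      s(e, f) ∈ uncovered G M := by
    simp [hU]
  have := G.ne_of_adj h₁.1
  have := G.ne_of_adj h₂.1
  have := G.ne_of_adj h₃.1
  have := ne_of_mem_uncovered_of_ne hA h₁ h₂ h₁₂
  have := ne_of_mem_uncovered_of_ne hA h₁ h₃ h₁₃
  have := ne_of_mem_uncovered_of_ne hA h₂ h₃ h₂₃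
  simp only [List.nodup_cons, List.mem_cons, List.not_mem_nil, List.nodup_nil, or_false, not_or]
  tauto

theorem eq_or_eq_of_coverCount_eq_two (hA : IsTripleFreeArray G M) {a b c d e f w : V}
    (hU : uncovered G M = {s(a, b), s(c, d), s(e, f)}) (hnd : [a, b, c, d, e, f].Nodup)
    (hbc : coverCount G M s(b, c) = 2) (hdw : coverCount G M s(d, w) = 2) :
    w = e ∨ w = f := by
  have core : ∀ {v x : V}, coverCount G M s(v, x) = 2 →
      v = a ∨ v = b ∨ v = c ∨ v = d ∨ v = e ∨ v = f := fun h =>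
    eq_or_of_mem_uncoveredVerts hU (mem_uncoveredVerts_of_coverCount_eq_two hA h)
  have uniq := @eq_of_coverCount_eq_two _ _ _ hA.perfect
  have hcd : coverCount G M s(d, c) = 0 :=
    coverCount_eq_zero_of_mem_uncovered (by rw [hU, Sym2.eq_swap]; simp)
  simp only [List.nodup_cons, List.mem_cons, List.not_mem_nil, List.nodup_nil, or_false,
    not_or] at hnd
  have hwd := (coverCount_comm _ _).trans hdw
  rcases core hwd with h | h | h | h | h | h
  · -- the square `abcd` leaves no room for the doubly covered edge at `e`
    rw [h] at hwd
    obtain ⟨z, hez⟩ := exists_coverCount_eq_two_of_mem_uncovered hA (v := e) (y := f)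
      (by rw [hU]; simp)
    have hze := (coverCount_comm _ _).trans hez
    rcases core hze with rfl | rfl | rfl | rfl | rfl | rfl
    · exact absurd (uniq hwd hze) (by tauto)
    · exact absurd (uniq hbc hze) (by tauto)
    · exact absurd (uniq ((coverCount_comm _ _).trans hbc) hze) (by tauto)
    · exact absurd (uniq ((coverCount_comm _ _).trans hwd) hze) (by tauto)
    · exact absurd (adj_of_coverCount_eq_two hez) (G.loopless.irrefl _)
    · rw [coverCount_eq_zero_of_mem_uncovered (by rw [hU]; simp)] at hez
      omega
  · rw [h] at hwd
    exact absurd (uniq hbc hwd) (by tauto)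
  · rw [h] at hdw
    omega
  · rw [h] at hdw
    exact absurd (adj_of_coverCount_eq_two hdw) (G.loopless.irrefl _)
  · exact Or.inl h
  · exact Or.inr h

theorem doublyCovered_eq_of_uncovered_eq (hA : IsTripleFreeArray G M) {a b c d e f : V}
    (hU : uncovered G M = {s(a, b), s(c, d), s(e, f)}) (hnd : [a, b, c, d, e, f].Nodup)
    (hbc : coverCount G M s(b, c) = 2) (hde : coverCount G M s(d, e) = 2) :
    doublyCovered G M = {s(b, c), s(d, e), s(f, a)} := by
  have uniq := @eq_of_coverCount_eq_two _ _ _ hA.perfect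
  have hfa : coverCount G M s(f, a) = 2 := by
    obtain ⟨w, hfw⟩ := exists_coverCount_eq_two_of_mem_uncovered hA (v := f) (y := e)
      (by rw [hU]; simp [Sym2.eq_swap])
    have hU' : uncovered G M = {s(c, d), s(e, f), s(a, b)} := by
      rw [hU]
      ext
      simp only [Set.mem_insert_iff, Set.mem_singleton_iff]
      tauto
    rcases eq_or_eq_of_coverCount_eq_two hA hU' ((List.rotate_perm _ 2).nodup_iff.mpr hnd)
      hde hfw with rfl | rfl
    · exact hfw
    · simp only [List.nodup_cons, List.mem_cons, List.not_mem_nil, not_or] at hnd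
      exact absurd (uniq hbc ((coverCount_comm _ _).trans hfw)) (by tauto)
  ext ⟨x, y⟩
  simp only [mem_doublyCovered, Set.mem_insert_iff, Set.mem_singleton_iff]
  constructor
  · intro hxy
    have hy : ∀ {v : V}, coverCount G M s(x, v) = 2 → y = v := uniq hxy
    rcases eq_or_of_mem_uncoveredVerts hU (mem_uncoveredVerts_of_coverCount_eq_two hA hxy) with
      rfl | rfl | rfl | rfl | rfl | rfl
    · rw [hy ((coverCount_comm _ _).trans hfa)]; simp
    · rw [hy hbc]; simp
    · rw [hy ((coverCount_comm _ _).trans hbc)]; simp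
    · rw [hy hde]; simp
    · rw [hy ((coverCount_comm _ _).trans hde)]; simp
    · rw [hy hfa]; simp
  · rintro (h | h | h) <;> rw [h] <;> assumption

theorem exists_hexagon (hA : IsTripleFreeArray G M) (h3 : (uncovered G M).ncard = 3) :
    ∃ v₁ v₂ v₃ v₄ v₅ v₆ : V, [v₁, v₂, v₃, v₄, v₅, v₆].Nodup ∧
      uncovered G M = {s(v₁, v₂), s(v₃, v₄), s(v₅, v₆)} ∧
      doublyCovered G M = {s(v₂, v₃), s(v₄, v₅), s(v₆, v₁)} := by
  obtain ⟨v₁, v₂, h₁₂⟩ :=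
    Sym2.exists.mp (Set.nonempty_of_ncard_ne_zero (s := uncovered G M) (by omega))
  obtain ⟨v₃, h₂₃⟩ := exists_coverCount_eq_two_of_mem_uncovered hA (mem_uncovered_comm.1 h₁₂)
  obtain ⟨v₄, h₃₄⟩ := (existsUnique_mem_uncovered_of_coverCount_eq_two hA
    ((coverCount_comm _ _).trans h₂₃)).exists
  have hne : s(v₁, v₂) ≠ s(v₃, v₄) := by
    have h₂₁ := coverCount_eq_zero_of_mem_uncovered (mem_uncovered_comm.1 h₁₂)
    have := G.ne_of_adj (adj_of_coverCount_eq_two h₂₃)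
    rw [Ne, Sym2.eq_iff]
    rintro (⟨rfl, -⟩ | ⟨-, rfl⟩)
    · omega
    · contradiction
  obtain ⟨x, y, hxy, hxy'⟩ := Sym2.exists.mp (Set.exists_mem_notMem_of_ncard_lt_ncard
    (s := {s(v₁, v₂), s(v₃, v₄)}) (t := uncovered G M) (by rw [Set.ncard_pair hne, h3]; omega))
  simp only [Set.mem_insert_iff, Set.mem_singleton_iff, not_or] at hxy'
  have hU := eq_insert_insert_singleton_of_ncard_eq_three h3 h₁₂ h₃₄ hxy hne
    (Ne.symm hxy'.1) (Ne.symm hxy'.2)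
  obtain ⟨v₅, h₄₅⟩ := exists_coverCount_eq_two_of_mem_uncovered hA (mem_uncovered_comm.1 h₃₄)
  obtain ⟨v₆, h₅₆⟩ : ∃ v₆, s(v₅, v₆) = s(x, y) := by
    rcases eq_or_eq_of_coverCount_eq_two hA hU
      (nodup_of_uncovered_eq hA hU hne (Ne.symm hxy'.1) (Ne.symm hxy'.2)) h₂₃ h₄₅ with
      rfl | rfl
    exacts [⟨y, rfl⟩, ⟨x, Sym2.eq_swap⟩]
  rw [← h₅₆] at hU hxy'
  have hnd := nodup_of_uncovered_eq hA hU hne (Ne.symm hxy'.1) (Ne.symm hxy'.2)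
  exact ⟨v₁, v₂, v₃, v₄, v₅, v₆, hnd, hU, doublyCovered_eq_of_uncovered_eq hA hU hnd h₂₃ h₄₅⟩

end

theorem stmt_12 (G : SimpleGraph V) (hG : IsCubic G) (hdf : defect G = 3)
    (M : Fin 3 → G.Subgraph) (hM : ∀ i, (M i).IsPerfectMatching)
    (hopt : (uncovered G M).ncard = 3)
    (h3 : ∀ e ∈ G.edgeSet, coverCount G M e ≠ 3) :
    ∃ (v : V) (p : G.Walk v v), p.IsCycle ∧ p.length = 6 ∧
      coreEdges G M = {e | e ∈ p.edges} ∧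
      ∀ u w : V, u ∈ p.support → w ∈ p.support → G.Adj u w → s(u, w) ∈ p.edges := by
  have hA : IsTripleFreeArray G M := ⟨hG, hM, h3⟩
  obtain ⟨v₁, v₂, v₃, v₄, v₅, v₆, hnd, hU, hD⟩ := exists_hexagon hA hopt
  have hinj := injOn_coverIndices hA (by omega) hD
  have adjU : ∀ {x y : V}, s(x, y) ∈ uncovered G M → G.Adj x y := fun h => h.1
  have adjD : ∀ {x y : V}, s(x, y) ∈ doublyCovered G M → G.Adj x y := adj_of_coverCount_eq_two
  obtain ⟨h₁₂, h₃₄, h₅₆⟩ : G.Adj v₁ v₂ ∧ G.Adj v₃ v₄ ∧ G.Adj v₅ v₆ :=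
    ⟨adjU (by simp [hU]), adjU (by simp [hU]), adjU (by simp [hU])⟩
  obtain ⟨h₂₃, h₄₅, h₆₁⟩ : G.Adj v₂ v₃ ∧ G.Adj v₄ v₅ ∧ G.Adj v₆ v₁ :=
    ⟨adjD (by simp [hD]), adjD (by simp [hD]), adjD (by simp [hD])⟩
  let p : G.Walk v₁ v₁ :=
    .cons h₁₂ <| .cons h₂₃ <| .cons h₃₄ <| .cons h₄₅ <| .cons h₅₆ <| .cons h₆₁ .nil
  have hcore : coreEdges G M = {e | e ∈ p.edges} := by
    rw [coreEdges_eq_union hA, hU, hD]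
    ext
    simp only [Set.union_insert, Set.union_singleton, Set.mem_insert_iff,
      Set.mem_singleton_iff, Walk.edges_cons, Walk.edges_nil, List.mem_cons, List.not_mem_nil,
      or_false, Set.mem_ofPred_eq, p]
    tauto
  have hverts : ∀ u ∈ p.support, u ∈ uncoveredVerts G M := by
    simp [p, uncoveredVerts, hU, exists_or]
  refine ⟨v₁, p, ?_, rfl, hcore, fun u w hu hw huw => ?_⟩
  · rw [Walk.isCycle_iff_isPath_tail_and_le_length]
    refine ⟨Walk.IsPath.mk' ?_, by simp [p]⟩
    simpa [p] using (List.rotate_perm _ 1).nodup_iff.mpr hnd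
  · exact hcore.subset ⟨huw, coverCount_ne_one_of_mem_uncoveredVerts hA hinj (hverts u hu)
      (hverts w hw) huw.ne⟩
end

section
/- Let G be a cubic graph containing an induced 6-cycle C = (e0 e1 e2 e3 e4 e5) such that G − E(C) admits a proper 3-edge-colouring under which the six edges joining C to the rest of G, taken in cyclic order, receive colours (1,1,2,2,3,3) or (1,2,2,3,3,1). Then df(G) ≤ 3. -/
open SimpleGraph

variable {V : Type} [Fintype V] [DecidableEq V]

/-- The edge set of the 6-cycle given by an enumeration `g` of its vertices. -/
def hexEdges (g : Fin 6 → V) : Set (Sym2 V) :=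
  {e | ∃ i : Fin 6, e = s(g i, g (i + 1))}

/-!
Rotate so that the edges leaving `C = g 0 … g 5` at `g 0, …, g 5` are coloured
`0, 0, 1, 1, 2, 2`. For each colour `k` take colour class `k` of `G - E(C)` and add the two cycle
edges `g 2 g 3, g 4 g 5` (`k = 0`), `g 0 g 1, g 4 g 5` (`k = 1`) or `g 0 g 1, g 2 g 3` (`k = 2`). Each cycle vertex is then met exactly once by each of the three sets, and every other
vertex is met once by each colour class, so these are three perfect matchings. They cover every
edge except `g 1 g 2, g 3 g 4, g 5 g 0`.
-/

open Function

section CubicGraph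

omit [Fintype V] [DecidableEq V]

variable {G : SimpleGraph V}

theorem defect_le_ncard_uncovered {M : Fin 3 → G.Subgraph} (hM : ∀ i, (M i).IsPerfectMatching) :
    defect G ≤ (uncovered G M).ncard :=
  Nat.sInf_le ⟨M, hM, rfl⟩

theorem IsCubic.adj_iff_of_adj (hG : IsCubic G) {v a b d w : V} (ha : G.Adj v a)
    (hb : G.Adj v b) (hd : G.Adj v d) (hab : a ≠ b) (had : a ≠ d) (hbd : b ≠ d) :
    G.Adj v w ↔ w = a ∨ w = b ∨ w = d := by
  have hsub : ({a, b, d} : Set V) ⊆ G.neighborSet v := by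
    rintro u (rfl | rfl | rfl) <;> assumption
  have hfin : (G.neighborSet v).Finite := Set.finite_of_ncard_ne_zero (by rw [hG v]; norm_num)
  have hcard : (G.neighborSet v).ncard ≤ ({a, b, d} : Set V).ncard := by
    rw [hG v, Set.ncard_eq_three.2 ⟨a, b, d, hab, had, hbd, rfl⟩]
  have heq := Set.eq_of_subset_of_ncard_le hsub hcard hfin
  simpa using (Set.ext_iff.1 heq w).symm

theorem IsCubic.existsUnique_adj_color {H : SimpleGraph V} {c : Sym2 V → Fin 3}
    (hG : IsCubic G) (hc : ProperEdgeColoring H c) {v : V} (hv : ∀ w, G.Adj v w → H.Adj v w)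
    (k : Fin 3) : ∃! w, G.Adj v w ∧ c s(v, w) = k := by
  let φ : G.neighborSet v → Fin 3 := fun w => c s(v, w)
  have hφ : Injective φ := by
    rintro ⟨w₁, h₁⟩ ⟨w₂, h₂⟩ h
    by_contra hne
    refine hc _ (hv _ h₁) _ (hv _ h₂) ?_ ⟨v, Sym2.mem_mk_left _ _, Sym2.mem_mk_left _ _⟩ h
    rw [Ne, Sym2.eq_iff]
    rintro (⟨-, h⟩ | ⟨-, h⟩)
    · exact hne (Subtype.ext h)
    · exact G.ne_of_adj h₁ h.symm
  have hcard : Nat.card (Fin 3) ≤ Nat.card (G.neighborSet v) := by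
    rw [Nat.card_coe_set_eq, hG v, Nat.card_eq_fintype_card, Fintype.card_fin]
  obtain ⟨⟨w, hw⟩, hwk⟩ := (hφ.bijective_of_nat_card_le hcard).2 k
  refine ⟨w, ⟨hw, hwk⟩, fun u hu => ?_⟩
  exact congrArg Subtype.val (@hφ ⟨u, hu.1⟩ ⟨w, hw⟩ (hu.2.trans hwk.symm))

end CubicGraph

section Hexagon

omit [Fintype V] [DecidableEq V]

variable {G : SimpleGraph V} {g x : Fin 6 → V} {c : Sym2 V → Fin 3}

theorem hexEdge_eq_hexEdge_iff (hinj : Injective g) {i j : Fin 6} :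
    s(g i, g (i + 1)) = s(g j, g (j + 1)) ↔ i = j := by
  refine ⟨fun h => ?_, fun h => h ▸ rfl⟩
  rcases Sym2.eq_iff.1 h with ⟨h₁, -⟩ | ⟨h₁, h₂⟩
  · exact hinj h₁
  · have key : ∀ i j : Fin 6, i = j + 1 → i + 1 = j → i = j := by decide
    exact key i j (hinj h₁) (hinj h₂)

theorem hexEdge_sub_one (i : Fin 6) : s(g i, g (i - 1)) = s(g (i - 1), g (i - 1 + 1)) := by
  rw [sub_add_cancel, Sym2.eq_swap]

theorem mk_notMem_hexEdges {v : V} (hv : ∀ j, v ≠ g j) (w : V) : s(v, w) ∉ hexEdges g := by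
  rintro ⟨j, hj⟩
  rcases Sym2.eq_iff.1 hj with ⟨h, -⟩ | ⟨h, -⟩
  · exact hv j h
  · exact hv (j + 1) h

theorem exists_pendant (hind : ∀ i j : Fin 6, G.Adj (g i) (g j) → j = i + 1 ∨ i = j + 1)
    {f : Fin 6 → Sym2 V} (hf : ∀ i : Fin 6, f i ∈ G.edgeSet ∧ g i ∈ f i ∧ f i ∉ hexEdges g) :
    ∃ x : Fin 6 → V, ∀ i, f i = s(g i, x i) ∧ G.Adj (g i) (x i) ∧ ∀ j, x i ≠ g j := by
  choose x hx using fun i => Sym2.mem_iff_exists.1 (hf i).2.1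
  have hadj : ∀ i, G.Adj (g i) (x i) := fun i => by simpa [hx i] using (hf i).1
  refine ⟨x, fun i => ⟨hx i, hadj i, fun j hj => (hf i).2.2 ?_⟩⟩
  rw [hx i, hj]
  rcases hind i j (hj ▸ hadj i) with rfl | rfl
  · exact ⟨i, rfl⟩
  · exact ⟨j, Sym2.eq_swap⟩

def hexMatching (G : SimpleGraph V) (g : Fin 6 → V) (c : Sym2 V → Fin 3)
    (S : Fin 3 → Finset (Fin 6)) (k : Fin 3) : G.Subgraph where
  verts := Set.univ
  Adj u w := G.Adj u w ∧
    ((s(u, w) ∉ hexEdges g ∧ c s(u, w) = k) ∨ ∃ j ∈ S k, s(u, w) = s(g j, g (j + 1)))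
  adj_sub h := h.1
  edge_vert _ := Set.mem_univ _
  symm := ⟨fun u w h => ⟨h.1.symm, by rw [Sym2.eq_swap]; exact h.2⟩⟩

variable {S : Fin 3 → Finset (Fin 6)} {k : Fin 3}

theorem hexMatching_adj_of_notMem_range {v : V} (hv : ∀ j, v ≠ g j) {w : V} :
    (hexMatching G g c S k).Adj v w ↔ G.Adj v w ∧ c s(v, w) = k := by
  have hw := mk_notMem_hexEdges hv w
  refine and_congr_right fun _ => ⟨?_, fun h => Or.inl ⟨hw, h⟩⟩
  rintro (⟨-, h⟩ | ⟨j, -, hj⟩)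
  · exact h
  · exact absurd ⟨j, hj⟩ hw

theorem hexMatching_adj_hex (hinj : Injective g) {i : Fin 6}
    (hnbr : ∀ w, G.Adj (g i) w ↔ w = g (i + 1) ∨ w = g (i - 1) ∨ w = x i)
    (hx : ∀ j, x i ≠ g j) {w : V} :
    (hexMatching G g c S k).Adj (g i) w ↔
      (w = g (i + 1) ∧ i ∈ S k) ∨ (w = g (i - 1) ∧ i - 1 ∈ S k) ∨
        (w = x i ∧ c s(g i, x i) = k) := by
  have hpend : s(g i, x i) ∉ hexEdges g := by
    rw [Sym2.eq_swap]
    exact mk_notMem_hexEdges hx _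
  change G.Adj (g i) w ∧ _ ↔ _
  rw [hnbr]
  constructor
  · rintro ⟨hw | hw | hw, h⟩ <;> subst hw
    · refine Or.inl ⟨rfl, ?_⟩
      rcases h with ⟨hn, -⟩ | ⟨j, hj, he⟩
      · exact absurd ⟨i, rfl⟩ hn
      · rwa [(hexEdge_eq_hexEdge_iff hinj).1 he]
    · refine Or.inr (Or.inl ⟨rfl, ?_⟩)
      rcases h with ⟨hn, -⟩ | ⟨j, hj, he⟩
      · exact absurd ⟨i - 1, hexEdge_sub_one i⟩ hn
      · rw [hexEdge_sub_one, hexEdge_eq_hexEdge_iff hinj] at he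
        rwa [he]
    · refine Or.inr (Or.inr ⟨rfl, ?_⟩)
      rcases h with ⟨-, hk⟩ | ⟨j, -, he⟩
      · exact hk
      · exact absurd ⟨j, he⟩ hpend
  · rintro (⟨rfl, hi⟩ | ⟨rfl, hi⟩ | ⟨rfl, hk⟩)
    · exact ⟨Or.inl rfl, Or.inr ⟨i, hi, rfl⟩⟩
    · exact ⟨Or.inr (Or.inl rfl), Or.inr ⟨i - 1, hi, hexEdge_sub_one i⟩⟩
    · exact ⟨Or.inr (Or.inr rfl), Or.inl ⟨hpend, hk⟩⟩

/-- `hS`: each hexagon vertex `g i` is met by exactly one of the hexagon edges `i`, `i - 1` and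
its pendant edge in the `k`-th matching. -/
theorem hexMatching_isPerfectMatching (hG : IsCubic G) (hinj : Injective g)
    (hnbr : ∀ i w, G.Adj (g i) w ↔ w = g (i + 1) ∨ w = g (i - 1) ∨ w = x i)
    (hx : ∀ i j, x i ≠ g j) (hc : ProperEdgeColoring (G.deleteEdges (hexEdges g)) c)
    (hS : ∀ i, (i ∈ S k ∧ i - 1 ∉ S k ∧ c s(g i, x i) ≠ k) ∨
      (i ∉ S k ∧ i - 1 ∈ S k ∧ c s(g i, x i) ≠ k) ∨
        (i ∉ S k ∧ i - 1 ∉ S k ∧ c s(g i, x i) = k)) :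
    (hexMatching G g c S k).IsPerfectMatching := by
  rw [Subgraph.isPerfectMatching_iff]
  intro v
  by_cases hv : ∃ i, v = g i
  · obtain ⟨i, rfl⟩ := hv
    simp_rw [hexMatching_adj_hex hinj (hnbr i) (hx i)]
    rcases hS i with ⟨h₁, h₂, h₃⟩ | ⟨h₁, h₂, h₃⟩ | ⟨h₁, h₂, h₃⟩ <;> simp [h₁, h₂, h₃]
  · simp only [not_exists] at hv
    simp_rw [hexMatching_adj_of_notMem_range hv]
    exact hG.existsUnique_adj_color hc
      (fun w hw => (deleteEdges_adj ..).2 ⟨hw, mk_notMem_hexEdges hv w⟩) k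

theorem ncard_uncovered_hexMatching_le (S : Fin 3 → Finset (Fin 6)) :
    (uncovered G (hexMatching G g c S)).ncard ≤
      (Finset.univ.filter fun j => ∀ k, j ∉ S k).card := by
  classical
  have hsub : uncovered G (hexMatching G g c S) ⊆
      ((Finset.univ.filter fun j => ∀ k, j ∉ S k).image fun j => s(g j, g (j + 1)) : Finset _) := by
    rintro e ⟨he, hnc⟩
    induction e using Sym2.ind with | _ u w => ?_
    by_cases hhex : s(u, w) ∈ hexEdges g
    · obtain ⟨j, hj⟩ := hhex
      simp only [Finset.coe_image, Finset.coe_filter, Set.mem_image, Set.mem_ofPred_eq]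
      exact ⟨j, ⟨Finset.mem_univ j, fun k hk => hnc k ⟨he, Or.inr ⟨j, hk, hj⟩⟩⟩, hj.symm⟩
    · exact absurd ⟨he, Or.inl ⟨hhex, rfl⟩⟩ (hnc (c s(u, w)))
  calc _ ≤ _ := Set.ncard_le_ncard hsub (Finset.finite_toSet _)
    _ = _ := Set.ncard_coe_finset _
    _ ≤ _ := Finset.card_image_le

end Hexagon

/-- The hexagon edges for the `k`-th matching when the pendant edges at `g r, …, g (r + 5)` are
coloured `0, 0, 1, 1, 2, 2`. -/
def hexChoice (r : Fin 6) (k : Fin 3) : Finset (Fin 6) :=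
  (![{2, 4}, {0, 4}, {0, 2}] k : Finset (Fin 6)).image (· + r)

theorem hexChoice_spec : ∀ (r : Fin 6) (k : Fin 3) (i : Fin 6),
    let p := ![0, 0, 1, 1, 2, 2] (i - r)
    (i ∈ hexChoice r k ∧ i - 1 ∉ hexChoice r k ∧ p ≠ k) ∨
      (i ∉ hexChoice r k ∧ i - 1 ∈ hexChoice r k ∧ p ≠ k) ∨
        (i ∉ hexChoice r k ∧ i - 1 ∉ hexChoice r k ∧ p = k) := by
  decide

theorem card_filter_hexChoice :
    ∀ r, (Finset.univ.filter fun j => ∀ k, j ∉ hexChoice r k).card = 3 := by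
  decide

theorem stmt_13 (G : SimpleGraph V) (hG : IsCubic G)
    (g : Fin 6 → V) (hinj : Function.Injective g)
    (hadj : ∀ i : Fin 6, G.Adj (g i) (g (i + 1)))
    (hind : ∀ i j : Fin 6, G.Adj (g i) (g j) → j = i + 1 ∨ i = j + 1)
    (f : Fin 6 → Sym2 V)
    (hf : ∀ i : Fin 6, f i ∈ G.edgeSet ∧ g i ∈ f i ∧ f i ∉ hexEdges g)
    (c : Sym2 V → Fin 3)
    (hc : ProperEdgeColoring (G.deleteEdges (hexEdges g)) c)
    (hpat : ∃ r : Fin 6, ∀ i : Fin 6,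
      c (f (i + r)) = ![0, 0, 1, 1, 2, 2] i) :
    defect G ≤ 3 := by
  obtain ⟨r, hr⟩ := hpat
  obtain ⟨x, hx⟩ := exists_pendant hind hf
  have hcol : ∀ i, c s(g i, x i) = ![0, 0, 1, 1, 2, 2] (i - r) := fun i => by
    rw [← (hx i).1, ← hr, sub_add_cancel]
  have hnbr : ∀ i w, G.Adj (g i) w ↔ w = g (i + 1) ∨ w = g (i - 1) ∨ w = x i := fun i w =>
    hG.adj_iff_of_adj (hadj i) (by simpa using (hadj (i - 1)).symm) (hx i).2.1
      (hinj.ne (by revert i; decide)) ((hx i).2.2 _).symm ((hx i).2.2 _).symm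
  have hM : ∀ k, (hexMatching G g c (hexChoice r) k).IsPerfectMatching := fun k =>
    hexMatching_isPerfectMatching hG hinj hnbr (fun i => (hx i).2.2) hc
      (fun i => by simpa only [hcol] using hexChoice_spec r k i)
  calc defect G ≤ _ := defect_le_ncard_uncovered hM
    _ ≤ _ := ncard_uncovered_hexMatching_le _
    _ = 3 := card_filter_hexChoice r
end
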